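/- arXiv:2010.14967 — 4 statements merged into one kernel-verified Lean document; each statement's English description precedes it below -/
import Mathlib

section
/- For every real B ≥ 0 and every real s ≥ -√(B/2), one has (√2·s + √B)^B · exp(-(√2·s + √B)²/2) ≤ exp(-s²/2) · (B/e)^{B/2}. -/
/-- Gaussian-type pointwise bound: for `B ≥ 0` and `s ≥ -√(B/2)`,
`(√2·s + √B)^B exp(-(√2·s + √B)²/2) ≤ exp(-s²/2) (B/e)^(B/2)`. -/
theorem stmt3 (B s : ℝ) (hB : 0 ≤ B) (hs : -Real.sqrt (B / 2) ≤ s) :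
    (Real.sqrt 2 * s + Real.sqrt B) ^ B *
        Real.exp (-(Real.sqrt 2 * s + Real.sqrt B) ^ 2 / 2)
      ≤ Real.exp (-s ^ 2 / 2) * (B / Real.exp 1) ^ (B / 2) := by
  have h2 : (0:ℝ) ≤ 2 := by norm_num
  have hsqB : Real.sqrt 2 * Real.sqrt (B / 2) = Real.sqrt B := by
    rw [← Real.sqrt_mul h2]
    congr 1; ring
  have ht0 : 0 ≤ Real.sqrt 2 * s + Real.sqrt B := by
    nlinarith [mul_le_mul_of_nonneg_left hs (Real.sqrt_nonneg 2), hsqB]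
  have hsq2 : Real.sqrt 2 ^ 2 = 2 := Real.sq_sqrt h2
  have hsqB2 : Real.sqrt B ^ 2 = B := Real.sq_sqrt hB
  -- rewrite RHS
  have hRHS : (B / Real.exp 1) ^ (B / 2) = B ^ (B / 2) * Real.exp (-(B / 2)) := by
    rw [Real.div_rpow hB (Real.exp_pos 1).le, Real.exp_one_rpow, div_eq_mul_inv,
      ← Real.exp_neg]
  rcases eq_or_lt_of_le hB with hB0 | hBpos
  · subst hB0
    simp only [Real.sqrt_zero, add_zero, zero_div, Real.rpow_zero, one_mul, mul_one]
    rw [Real.exp_le_exp]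
    nlinarith [sq_nonneg s]
  rcases eq_or_lt_of_le ht0 with ht0' | htpos
  · rw [← ht0', Real.zero_rpow hBpos.ne', zero_mul]
    positivity
  -- main case
  have hBs : 0 < Real.sqrt B := Real.sqrt_pos.mpr hBpos
  have key : (Real.sqrt 2 * s + Real.sqrt B) ^ B
      ≤ B ^ (B / 2) * Real.exp (Real.sqrt 2 * s * Real.sqrt B) := by
    have h1 : Real.sqrt 2 * s + Real.sqrt B
        ≤ Real.sqrt B * Real.exp (Real.sqrt 2 * s / Real.sqrt B) := by
      have := Real.add_one_le_exp (Real.sqrt 2 * s / Real.sqrt B)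
      have := mul_le_mul_of_nonneg_left this hBs.le
      rw [mul_add, mul_one, mul_div_cancel₀ _ hBs.ne'] at this
      linarith
    calc (Real.sqrt 2 * s + Real.sqrt B) ^ B
        ≤ (Real.sqrt B * Real.exp (Real.sqrt 2 * s / Real.sqrt B)) ^ B :=
          Real.rpow_le_rpow ht0 h1 hB
      _ = Real.sqrt B ^ B * Real.exp (Real.sqrt 2 * s / Real.sqrt B) ^ B := by
          rw [Real.mul_rpow hBs.le (Real.exp_pos _).le]
      _ = B ^ (B / 2) * Real.exp (Real.sqrt 2 * s * Real.sqrt B) := by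
          rw [← Real.exp_one_rpow (Real.sqrt 2 * s / Real.sqrt B),
            ← Real.rpow_mul (Real.exp_pos 1).le, Real.exp_one_rpow,
            div_mul_eq_mul_div, mul_div_assoc, Real.div_sqrt,
            Real.sqrt_eq_rpow, ← Real.rpow_mul hB, one_div, inv_mul_eq_div]
  calc (Real.sqrt 2 * s + Real.sqrt B) ^ B *
        Real.exp (-(Real.sqrt 2 * s + Real.sqrt B) ^ 2 / 2)
      ≤ (B ^ (B / 2) * Real.exp (Real.sqrt 2 * s * Real.sqrt B)) *
        Real.exp (-(Real.sqrt 2 * s + Real.sqrt B) ^ 2 / 2) := by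
        exact mul_le_mul_of_nonneg_right key (Real.exp_pos _).le
    _ = B ^ (B / 2) * Real.exp (Real.sqrt 2 * s * Real.sqrt B +
          -(Real.sqrt 2 * s + Real.sqrt B) ^ 2 / 2) := by
        rw [mul_assoc, ← Real.exp_add]
    _ ≤ B ^ (B / 2) * Real.exp (-s ^ 2 / 2 + -(B / 2)) := by
        apply mul_le_mul_of_nonneg_left _ (Real.rpow_nonneg hB _)
        rw [Real.exp_le_exp]
        nlinarith [sq_nonneg s]
    _ = Real.exp (-s ^ 2 / 2) * (B / Real.exp 1) ^ (B / 2) := by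
        rw [hRHS, Real.exp_add]; ring
end

section
/- If Z ∈ ℂ^{2d×d} is a normalized Lagrangian frame (i.e. Zᵀ Ω Z = 0 and Z* Ω Z = 2i·Id_d, where Ω is the standard symplectic matrix), then the real matrix F = (Re Z, −Im Z) ∈ ℝ^{2d×2d} is symplectic, i.e. Fᵀ Ω F = Ω. -/
open Matrix

/-- The canonical symplectic matrix `Ω = [[0, -Id],[Id, 0]]` on `ℝ^{2d}`. -/
noncomputable def OmegaR (d : ℕ) : Matrix (Fin d ⊕ Fin d) (Fin d ⊕ Fin d) ℝ :=
  Matrix.fromBlocks 0 (-1) 1 0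

/-- The canonical symplectic matrix over `ℂ`. -/
noncomputable def OmegaC (d : ℕ) : Matrix (Fin d ⊕ Fin d) (Fin d ⊕ Fin d) ℂ :=
  Matrix.fromBlocks 0 (-1) 1 0

lemma omegaC_eq_map (d : ℕ) : OmegaC d = (OmegaR d).map Complex.ofRealHom := by
  ext (i | i) (j | j) <;>
    simp [OmegaC, OmegaR, Matrix.map_apply, Matrix.one_apply, apply_ite]

/-- If `Z ∈ ℂ^{2d×d}` is a normalized Lagrangian frame (`Zᵀ Ω Z = 0`, `Z* Ω Z = 2i·Id`),
then the real matrix `F = (Re Z, -Im Z)` is symplectic: `Fᵀ Ω F = Ω`. -/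
theorem stmt5 (d : ℕ) (Z : Matrix (Fin d ⊕ Fin d) (Fin d) ℂ)
    (h1 : Zᵀ * OmegaC d * Z = 0)
    (h2 : Zᴴ * OmegaC d * Z = (2 * Complex.I) • (1 : Matrix (Fin d) (Fin d) ℂ)) :
    let F : Matrix (Fin d ⊕ Fin d) (Fin d ⊕ Fin d) ℝ :=
      Matrix.of fun i j => Sum.elim (fun k => (Z i k).re) (fun k => -(Z i k).im) j
    Fᵀ * OmegaR d * F = OmegaR d := by
  intro F
  set X : Matrix (Fin d ⊕ Fin d) (Fin d) ℝ := Matrix.of fun i k => (Z i k).re with hX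
  set Y : Matrix (Fin d ⊕ Fin d) (Fin d) ℝ := Matrix.of fun i k => (Z i k).im with hY
  have hF : F = Matrix.fromCols X (-Y) := by
    ext i (j | j) <;> simp [F, X, Y, Matrix.fromCols]
  set Xc := X.map Complex.ofRealHom with hXc
  set Yc := Y.map Complex.ofRealHom with hYc
  have hZ : Z = Xc + Complex.I • Yc := by
    ext i k
    simp [hXc, hYc, X, Y, Matrix.map_apply, Complex.ext_iff]
  have hZH : Zᴴ = Xcᵀ - Complex.I • Ycᵀ := by
    ext k i
    simp [hXc, hYc, X, Y, Matrix.map_apply, Matrix.conjTranspose_apply, Complex.ext_iff]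
  set A := Xᵀ * OmegaR d * X with hA
  set B := Yᵀ * OmegaR d * Y with hB
  set C := Xᵀ * OmegaR d * Y with hC
  set D := Yᵀ * OmegaR d * X with hD
  have mapmul : ∀ (P Q : Matrix (Fin d ⊕ Fin d) (Fin d) ℝ),
      (Pᵀ * OmegaR d * Q).map Complex.ofRealHom
        = (P.map Complex.ofRealHom)ᵀ * OmegaC d * (Q.map Complex.ofRealHom) := by
    intro P Q
    rw [omegaC_eq_map, ← Matrix.transpose_map, ← Matrix.map_mul, ← Matrix.map_mul]
  have e1 : (A - B).map Complex.ofRealHom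
      + Complex.I • ((C + D).map Complex.ofRealHom) = 0 := by
    have h1' := h1
    rw [hZ] at h1'
    rw [← h1', Matrix.map_sub _ (by intro a b; simp) _ _, Matrix.map_add _ (by intro a b; simp) _ _, hA, hB, hC, hD,
      mapmul, mapmul, mapmul, mapmul]
    simp only [transpose_add, transpose_smul, Matrix.add_mul, Matrix.mul_add,
      Matrix.smul_mul, Matrix.mul_smul, smul_smul, Complex.I_mul_I, neg_one_smul,
      smul_add]
    module
  have e2 : (A + B).map Complex.ofRealHom
      + Complex.I • ((C - D).map Complex.ofRealHom)
      = (2 * Complex.I) • (1 : Matrix (Fin d) (Fin d) ℂ) := by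
    have h2' := h2
    rw [hZH, hZ] at h2'
    rw [← h2', Matrix.map_add _ (by intro a b; simp) _ _, Matrix.map_sub _ (by intro a b; simp) _ _, hA, hB, hC, hD,
      mapmul, mapmul, mapmul, mapmul]
    simp only [Matrix.sub_mul, Matrix.add_mul, Matrix.mul_add, Matrix.mul_sub,
      Matrix.smul_mul, Matrix.mul_smul, smul_smul, Complex.I_mul_I, neg_one_smul,
      smul_add, smul_sub]
    module
  have hAB : A - B = 0 := by
    ext a b
    have h := congrFun (congrFun e1 a) b
    simp [Matrix.add_apply, Matrix.smul_apply, Matrix.map_apply, Complex.ext_iff,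
      smul_eq_mul] at h
    simp [h]
  have hCD : C + D = 0 := by
    ext a b
    have h := congrFun (congrFun e1 a) b
    simp [Matrix.add_apply, Matrix.smul_apply, Matrix.map_apply, Complex.ext_iff,
      smul_eq_mul] at h
    simp [h]
  have hAB2 : A + B = 0 := by
    ext a b
    have h := congrFun (congrFun e2 a) b
    simp [Matrix.add_apply, Matrix.sub_apply, Matrix.smul_apply, Matrix.map_apply,
      Matrix.one_apply, Complex.ext_iff, smul_eq_mul, apply_ite] at h
    rcases eq_or_ne a b with hab | hab
    · subst hab; simp at h; simp [h.1]
    · simp [hab] at h; simp [h.1]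
  have hCD2 : ∀ a b, C a b - D a b = if a = b then 2 else 0 := by
    intro a b
    have h := congrFun (congrFun e2 a) b
    simp [Matrix.add_apply, Matrix.sub_apply, Matrix.smul_apply, Matrix.map_apply,
      Matrix.one_apply, Complex.ext_iff, smul_eq_mul, apply_ite] at h
    rcases eq_or_ne a b with hab | hab
    · subst hab; simp at h ⊢; exact h.2
    · simp [hab] at h ⊢; exact h.2
  have hA0 : A = 0 := by
    linear_combination (norm := module) (1/2 : ℝ) • hAB + (1/2 : ℝ) • hAB2
  have hB0 : B = 0 := by
    linear_combination (norm := module) (-1/2 : ℝ) • hAB + (1/2 : ℝ) • hAB2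
  have hC1 : C = 1 := by
    ext a b
    have e := congrFun (congrFun hCD a) b
    have e' := hCD2 a b
    simp [Matrix.add_apply, Matrix.one_apply] at e ⊢
    rcases eq_or_ne a b with hab | hab
    · subst hab; simp at e' ⊢; linarith
    · simp [hab] at e' ⊢; linarith
  have hD1 : D = -1 := by
    ext a b
    have e := congrFun (congrFun hCD a) b
    have e' := hCD2 a b
    simp [Matrix.add_apply, Matrix.neg_apply, Matrix.one_apply] at e ⊢
    rcases eq_or_ne a b with hab | hab
    · subst hab; simp at e' ⊢; linarith
    · simp [hab] at e' ⊢; linarith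
  rw [hF, Matrix.transpose_fromCols, Matrix.fromRows_mul, Matrix.fromRows_mul_fromCols]
  simp only [Matrix.mul_neg, Matrix.neg_mul, Matrix.transpose_neg, neg_neg]
  show Matrix.fromBlocks A (-C) (-D) B = OmegaR d
  rw [hA0, hB0, hC1, hD1, neg_neg]
  rfl
end

section
/- Let Z be a normalized Lagrangian frame spanning a positive Lagrangian L ⊂ ℂ^{2d}. Then π_L := (i/2) Z Z* Ωᵀ and π_{L̄} := −(i/2) Z̄ Zᵀ Ωᵀ are the projections onto L and L̄ respectively along the decomposition ℂ^{2d} = L ⊕ L̄; in particular π_L + π_{L̄} = Id, π_L² = π_L, π_{L̄}² = π_{L̄}, range(π_L) = L, and range(π_{L̄}) = L̄. -/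
open Matrix

lemma Jt (d : ℕ) : (OmegaC d)ᵀ = -OmegaC d := by
  simp [OmegaC, Matrix.fromBlocks_transpose, Matrix.fromBlocks_neg]

lemma JJ (d : ℕ) : OmegaC d * OmegaC d = -1 := by
  rw [show (-1 : Matrix (Fin d ⊕ Fin d) (Fin d ⊕ Fin d) ℂ) = Matrix.fromBlocks (-1) 0 0 (-1) by
    simp [Matrix.fromBlocks_neg, ← Matrix.fromBlocks_one]]
  simp [OmegaC, Matrix.fromBlocks_multiply]

lemma Jmap (d : ℕ) : (OmegaC d).map (starRingEnd ℂ) = OmegaC d := by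
  have h0 : ((-1 : Matrix (Fin d) (Fin d) ℂ)).map (starRingEnd ℂ) = -1 := by
    ext i j; simp [Matrix.map_apply, Matrix.one_apply]
  have h1 : ((1 : Matrix (Fin d) (Fin d) ℂ)).map (starRingEnd ℂ) = 1 := by
    ext i j; simp [Matrix.map_apply, Matrix.one_apply]
  simp [OmegaC, Matrix.fromBlocks_map, h0, h1]

set_option maxHeartbeats 1000000 in
/-- For a normalized Lagrangian frame `Z`, the matrices `π_L = (i/2) Z Z* Ωᵀ` and
`π_{L̄} = -(i/2) Z̄ Zᵀ Ωᵀ` are the projections onto `L = range Z` and `L̄ = range Z̄`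
along `ℂ^{2d} = L ⊕ L̄`. -/
theorem stmt8 (d : ℕ) (Z : Matrix (Fin d ⊕ Fin d) (Fin d) ℂ)
    (h1 : Zᵀ * OmegaC d * Z = 0)
    (h2 : Zᴴ * OmegaC d * Z = (2 * Complex.I) • (1 : Matrix (Fin d) (Fin d) ℂ)) :
    let piL : Matrix (Fin d ⊕ Fin d) (Fin d ⊕ Fin d) ℂ :=
      (Complex.I / 2) • (Z * Zᴴ * (OmegaC d)ᵀ)
    let piLbar : Matrix (Fin d ⊕ Fin d) (Fin d ⊕ Fin d) ℂ :=
      (-(Complex.I / 2)) • (Z.map (starRingEnd ℂ) * Zᵀ * (OmegaC d)ᵀ)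
    piL + piLbar = 1 ∧ piL * piL = piL ∧ piLbar * piLbar = piLbar ∧
      LinearMap.range piL.mulVecLin = LinearMap.range Z.mulVecLin ∧
      LinearMap.range piLbar.mulVecLin = LinearMap.range (Z.map (starRingEnd ℂ)).mulVecLin := by
  intro piL piLbar
  set J := OmegaC d with hJ
  set Zb := Z.map (starRingEnd ℂ) with hZbdef
  set c := (2 : ℂ) * Complex.I with hc
  have hc0 : c ≠ 0 := by simp [hc, Complex.I_ne_zero]
  have hJt : Jᵀ = -J := Jt d
  have hJJ : J * J = -1 := JJ d
  have hJtJ : Jᵀ * J = 1 := by rw [hJt, Matrix.neg_mul, hJJ, neg_neg]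
  have hJJt : J * Jᵀ = 1 := by rw [hJt, Matrix.mul_neg, hJJ, neg_neg]
  have hZH : Zᴴ = Zbᵀ := by
    ext i j
    simp [Matrix.conjTranspose_apply, Matrix.transpose_apply, Matrix.map_apply, hZbdef]
  -- the four block relations
  have hZbZ : Zbᵀ * J * Z = c • 1 := by rw [← hZH]; exact h2
  have hZbZb : Zbᵀ * J * Zb = 0 := by
    have := congrArg (fun M => M.map (starRingEnd ℂ)) h1
    simpa [Matrix.map_mul, Jmap d, Matrix.transpose_map, hZbdef, hJ] using this
  have hA : Zbᵀ * Jᵀ * Z = (-c) • 1 := by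
    rw [hJt, Matrix.mul_neg, Matrix.neg_mul, hZbZ, neg_smul]
  have hZZb : Zᵀ * J * Zb = (-c) • 1 := by
    have ht : Zᵀ * J * Zb = (Zbᵀ * Jᵀ * Z)ᵀ := by
      rw [Matrix.transpose_mul, Matrix.transpose_mul, Matrix.transpose_transpose,
        Matrix.transpose_transpose, Matrix.mul_assoc]
    rw [ht, hA]; simp
  have hB : Zᵀ * Jᵀ * Zb = c • 1 := by
    rw [hJt, Matrix.mul_neg, Matrix.neg_mul, hZZb, neg_smul, neg_neg]
  -- right-associated versions
  have hAr : Zᴴ * (Jᵀ * Z) = (-c) • 1 := by rw [← Matrix.mul_assoc, hZH]; exact hA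
  have hBr : Zᵀ * (Jᵀ * Zb) = c • 1 := by rw [← Matrix.mul_assoc]; exact hB
  -- the key decomposition identity via the frame W = [Z Zb]
  have hWtW : fromRows Zᵀ Zbᵀ * J * fromCols Z Zb = c • J := by
    rw [Matrix.fromRows_mul, Matrix.fromRows_mul_fromCols, h1, hZZb, hZbZ, hZbZb]
    rw [hJ, show OmegaC d = Matrix.fromBlocks 0 (-1) 1 0 from rfl, Matrix.fromBlocks_smul]
    simp
  have hNW : (c⁻¹ • (Jᵀ * fromRows Zᵀ Zbᵀ * J)) * fromCols Z Zb = 1 := by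
    rw [Matrix.smul_mul, Matrix.mul_assoc, Matrix.mul_assoc, ← Matrix.mul_assoc (fromRows Zᵀ Zbᵀ),
      hWtW, Matrix.mul_smul, hJtJ, smul_smul, inv_mul_cancel₀ hc0, one_smul]
  have hWN : fromCols Z Zb * (c⁻¹ • (Jᵀ * fromRows Zᵀ Zbᵀ * J)) = 1 :=
    mul_eq_one_comm.mp hNW
  have hkey : Z * Zᴴ - Zb * Zᵀ = (-c) • J := by
    have w1 : fromCols Z Zb * Jᵀ * fromRows Zᵀ Zbᵀ * J = c • 1 := by
      rw [Matrix.mul_smul] at hWN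
      have := congrArg (fun M => c • M) hWN
      simp only [smul_smul, mul_inv_cancel₀ hc0, one_smul] at this
      rw [← this, ← Matrix.mul_assoc, ← Matrix.mul_assoc]
    have w2 : fromCols Z Zb * Jᵀ * fromRows Zᵀ Zbᵀ = c • Jᵀ := by
      have := congrArg (fun M => M * Jᵀ) w1
      rw [Matrix.mul_assoc _ J Jᵀ, hJJt, Matrix.mul_one, Matrix.smul_mul, Matrix.one_mul] at this
      exact this
    have e3 : fromCols Z Zb * Jᵀ = fromCols (-Zb) Z := by
      rw [hJt, hJ, show OmegaC d = Matrix.fromBlocks 0 (-1) 1 0 from rfl,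
        Matrix.fromBlocks_neg, Matrix.fromCols_mul_fromBlocks]
      simp
    rw [e3, Matrix.fromCols_mul_fromRows, Matrix.neg_mul] at w2
    rw [hZH, sub_eq_add_neg, add_comm, w2, hJt]
    simp
  -- scalar facts
  have sc1 : Complex.I / 2 * -c = 1 := by
    rw [hc]; have := Complex.I_mul_I; ring_nf; linear_combination -this
  have sc2 : -(Complex.I / 2) * c = 1 := by
    rw [hc]; have := Complex.I_mul_I; ring_nf; linear_combination -this
  -- projections sum to one
  have hsum : piL + piLbar = 1 := by
    show (Complex.I / 2) • (Z * Zᴴ * Jᵀ) + (-(Complex.I / 2)) • (Zb * Zᵀ * Jᵀ) = 1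
    rw [neg_smul, ← sub_eq_add_neg, ← smul_sub, ← Matrix.sub_mul, hkey, Matrix.smul_mul,
      hJt, Matrix.mul_neg, hJJ, neg_neg, smul_smul, sc1, one_smul]
  -- idempotency
  have hm1 : (Z * Zᴴ * Jᵀ) * (Z * Zᴴ * Jᵀ) = (-c) • (Z * Zᴴ * Jᵀ) := by
    calc (Z * Zᴴ * Jᵀ) * (Z * Zᴴ * Jᵀ) = Z * (Zᴴ * (Jᵀ * Z) * (Zᴴ * Jᵀ)) := by
          simp only [Matrix.mul_assoc]
      _ = Z * ((-c) • (1 : Matrix (Fin d) (Fin d) ℂ) * (Zᴴ * Jᵀ)) := by rw [hAr]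
      _ = (-c) • (Z * Zᴴ * Jᵀ) := by
          rw [Matrix.smul_mul, Matrix.one_mul, Matrix.mul_smul, Matrix.mul_assoc]
  have hm2 : (Zb * Zᵀ * Jᵀ) * (Zb * Zᵀ * Jᵀ) = c • (Zb * Zᵀ * Jᵀ) := by
    calc (Zb * Zᵀ * Jᵀ) * (Zb * Zᵀ * Jᵀ) = Zb * (Zᵀ * (Jᵀ * Zb) * (Zᵀ * Jᵀ)) := by
          simp only [Matrix.mul_assoc]
      _ = Zb * (c • (1 : Matrix (Fin d) (Fin d) ℂ) * (Zᵀ * Jᵀ)) := by rw [hBr]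
      _ = c • (Zb * Zᵀ * Jᵀ) := by
          rw [Matrix.smul_mul, Matrix.one_mul, Matrix.mul_smul, Matrix.mul_assoc]
  have hp1 : piL * piL = piL := by
    show (Complex.I / 2) • (Z * Zᴴ * Jᵀ) * ((Complex.I / 2) • (Z * Zᴴ * Jᵀ))
      = (Complex.I / 2) • (Z * Zᴴ * Jᵀ)
    rw [Matrix.smul_mul, Matrix.mul_smul, hm1, smul_smul, smul_smul]
    rw [show Complex.I / 2 * (Complex.I / 2) * -c = Complex.I / 2 by
      rw [mul_assoc, sc1, mul_one]]
  have hp2 : piLbar * piLbar = piLbar := by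
    show (-(Complex.I / 2)) • (Zb * Zᵀ * Jᵀ) * ((-(Complex.I / 2)) • (Zb * Zᵀ * Jᵀ))
      = (-(Complex.I / 2)) • (Zb * Zᵀ * Jᵀ)
    rw [Matrix.smul_mul, Matrix.mul_smul, hm2, smul_smul, smul_smul]
    rw [show -(Complex.I / 2) * -(Complex.I / 2) * c = -(Complex.I / 2) by
      rw [mul_assoc, sc2, mul_one]]
  -- projection fixes the frame
  have hPZ : piL * Z = Z := by
    show (Complex.I / 2) • (Z * Zᴴ * Jᵀ) * Z = Z
    have hAl : Zᴴ * Jᵀ * Z = (-c) • 1 := by rw [hZH]; exact hA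
    rw [Matrix.smul_mul, Matrix.mul_assoc, Matrix.mul_assoc, ← Matrix.mul_assoc Zᴴ, hAl,
      Matrix.mul_smul, Matrix.mul_one, smul_smul, sc1, one_smul]
  have hPbZb : piLbar * Zb = Zb := by
    show (-(Complex.I / 2)) • (Zb * Zᵀ * Jᵀ) * Zb = Zb
    rw [Matrix.smul_mul, Matrix.mul_assoc, Matrix.mul_assoc, ← Matrix.mul_assoc Zᵀ, hB,
      Matrix.mul_smul, Matrix.mul_one, smul_smul, sc2, one_smul]
  refine ⟨hsum, hp1, hp2, ?_, ?_⟩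
  · apply le_antisymm
    · rintro x ⟨v, rfl⟩
      refine ⟨(Complex.I / 2) • ((Zᴴ * Jᵀ) *ᵥ v), ?_⟩
      show Z *ᵥ ((Complex.I / 2) • ((Zᴴ * Jᵀ) *ᵥ v))
        = ((Complex.I / 2) • (Z * Zᴴ * Jᵀ)) *ᵥ v
      rw [Matrix.mulVec_smul, Matrix.mulVec_mulVec, Matrix.smul_mulVec,
        ← Matrix.mul_assoc]
    · rintro x ⟨v, rfl⟩
      exact ⟨Z *ᵥ v, by
        show piL *ᵥ (Z *ᵥ v) = Z *ᵥ v
        rw [Matrix.mulVec_mulVec, hPZ]⟩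
  · apply le_antisymm
    · rintro x ⟨v, rfl⟩
      refine ⟨(-(Complex.I / 2)) • ((Zᵀ * Jᵀ) *ᵥ v), ?_⟩
      show Zb *ᵥ ((-(Complex.I / 2)) • ((Zᵀ * Jᵀ) *ᵥ v))
        = ((-(Complex.I / 2)) • (Zb * Zᵀ * Jᵀ)) *ᵥ v
      rw [Matrix.mulVec_smul, Matrix.mulVec_mulVec, Matrix.smul_mulVec,
        ← Matrix.mul_assoc]
    · rintro x ⟨v, rfl⟩
      exact ⟨Zb *ᵥ v, by
        show piLbar *ᵥ (Zb *ᵥ v) = Zb *ᵥ v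
        rw [Matrix.mulVec_mulVec, hPbZb]⟩
end

section
/- Let ρ > 0 and let b = (b_{αβ})_{α,β ∈ ℕ^d} be a family of complex numbers such that b_{αβ} = 0 unless |α−β| ≤ 2 and |b_{αβ}| ≤ C|α| for all α, β. Then for every 0 < σ < ρ, the linear operator K defined by (K c)_α = Σ_β b_{αβ} c_β maps ℓ_ρ(ℕ^d) into ℓ_{ρ−σ}(ℕ^d) boundedly, with operator norm ≤ C_ρ/(e·σ) for some constant C_ρ depending only on C, ρ, and d. -/
open scoped BigOperators

/-- `r * exp (-(σ*r)) ≤ 1/(e*σ)` for `r ≥ 0`, `σ > 0`. -/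
lemma stmt11_aux_sup {σ r : ℝ} (hσ : 0 < σ) (_hr : 0 ≤ r) :
    r * Real.exp (-(σ * r)) ≤ 1 / (Real.exp 1 * σ) := by
  have h1 : σ * r ≤ Real.exp (σ * r - 1) := by
    have := Real.add_one_le_exp (σ * r - 1)
    linarith
  have h2 : σ * r * Real.exp (-(σ * r)) ≤ Real.exp (-1 : ℝ) := by
    calc σ * r * Real.exp (-(σ * r))
        ≤ Real.exp (σ * r - 1) * Real.exp (-(σ * r)) := by
          exact mul_le_mul_of_nonneg_right h1 (Real.exp_nonneg _)
      _ = Real.exp (-1 : ℝ) := by rw [← Real.exp_add]; ring_nf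
  have he : Real.exp (-1 : ℝ) = 1 / Real.exp 1 := by
    rw [Real.exp_neg]; exact inv_eq_one_div _
  rw [he] at h2
  rw [div_mul_eq_div_div, le_div_iff₀ hσ]
  calc r * Real.exp (-(σ * r)) * σ = σ * r * Real.exp (-(σ * r)) := by ring
    _ ≤ 1 / Real.exp 1 := h2

/-- A banded matrix `(b_{αβ})` with `b_{αβ} = 0` unless `|α-β| ≤ 2` and `|b_{αβ}| ≤ C|α|`
maps `ℓ_ρ(ℕ^d)` boundedly into `ℓ_{ρ-σ}(ℕ^d)` with operator norm at most `C_ρ/(eσ)`,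
for every `0 < σ < ρ`. -/
theorem stmt11 (d : ℕ) (ρ C : ℝ) (hρ : 0 < ρ)
    (b : (Fin d → ℕ) → (Fin d → ℕ) → ℂ)
    (hvanish : ∀ α β : Fin d → ℕ,
      2 < ∑ i, ((α i : ℤ) - (β i : ℤ)).natAbs → b α β = 0)
    (hbound : ∀ α β : Fin d → ℕ, ‖b α β‖ ≤ C * (∑ i, α i : ℕ)) :
    ∃ Cρ : ℝ, ∀ σ : ℝ, 0 < σ → σ < ρ →
      ∀ c : (Fin d → ℕ) → ℂ,
        Summable (fun α : Fin d → ℕ => ‖c α‖ * Real.exp (ρ * (∑ i, α i : ℕ))) →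
        Summable (fun α : Fin d → ℕ =>
            ‖∑' β : Fin d → ℕ, b α β * c β‖ * Real.exp ((ρ - σ) * (∑ i, α i : ℕ))) ∧
          (∑' α : Fin d → ℕ,
              ‖∑' β : Fin d → ℕ, b α β * c β‖ * Real.exp ((ρ - σ) * (∑ i, α i : ℕ)))
            ≤ (Cρ / (Real.exp 1 * σ)) *
                ∑' α : Fin d → ℕ, ‖c α‖ * Real.exp (ρ * (∑ i, α i : ℕ)) := by
  classical
  set C' : ℝ := max C 0 with hC'def
  have hC0 : 0 ≤ C' := le_max_right _ _
  have hCC : C ≤ C' := le_max_left _ _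
  set nm : (Fin d → ℕ) → ℕ := fun α => ∑ i, α i with hnm
  -- band lemma
  have hb : ∀ α β, b α β ≠ 0 → (∑ i, ((α i : ℤ) - (β i : ℤ)).natAbs) ≤ 2 := by
    intro α β h
    by_contra h'
    exact h (hvanish α β (by omega))
  have hcoord : ∀ α β : Fin d → ℕ, b α β ≠ 0 → ∀ i,
      ((α i : ℤ) - (β i : ℤ)).natAbs ≤ 2 := by
    intro α β h i
    exact le_trans (Finset.single_le_sum
      (f := fun i => ((α i : ℤ) - (β i : ℤ)).natAbs)
      (fun _ _ => Nat.zero_le _) (Finset.mem_univ i)) (hb α β h)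
  -- Finset support
  set S : (Fin d → ℕ) → Finset (Fin d → ℕ) :=
    fun β => Fintype.piFinset fun i => Finset.Icc (β i - 2) (β i + 2) with hSdef
  have hmem : ∀ α β, b α β ≠ 0 → α ∈ S β := by
    intro α β h
    rw [hSdef, Fintype.mem_piFinset]
    intro i
    have h2 := hcoord α β h i
    rw [Finset.mem_Icc]
    omega
  have hmem' : ∀ α β, b α β ≠ 0 → β ∈ S α := by
    intro α β h
    rw [hSdef, Fintype.mem_piFinset]
    intro i
    have h2 := hcoord α β h i
    rw [Finset.mem_Icc]
    omega
  have hcard : ∀ β, ((S β).card : ℝ) ≤ 5 ^ d := by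
    intro β
    have h1 : (S β).card = ∏ i : Fin d, (Finset.Icc (β i - 2) (β i + 2)).card :=
      Fintype.card_piFinset _
    have h2 : (S β).card ≤ 5 ^ d := by
      rw [h1]
      calc ∏ i : Fin d, (Finset.Icc (β i - 2) (β i + 2)).card
          ≤ ∏ _i : Fin d, 5 := by
            apply Finset.prod_le_prod'
            intro i _
            rw [Nat.card_Icc]
            omega
        _ = 5 ^ d := by simp
    calc ((S β).card : ℝ) ≤ ((5 ^ d : ℕ) : ℝ) := Nat.cast_le.mpr h2
      _ = 5 ^ d := by push_cast; ring
  have hsize : ∀ α β, b α β ≠ 0 → nm α ≤ nm β + 2 := by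
    intro α β h
    have h1 : ∀ i, α i ≤ β i + ((α i : ℤ) - (β i : ℤ)).natAbs := by
      intro i; omega
    have h2 : nm α ≤ ∑ i, (β i + ((α i : ℤ) - (β i : ℤ)).natAbs) :=
      Finset.sum_le_sum fun i _ => h1 i
    rw [Finset.sum_add_distrib] at h2
    have := hb α β h
    have e1 : nm α = ∑ i, α i := rfl
    have e2 : nm β = ∑ i, β i := rfl
    omega
  refine ⟨(5 : ℝ) ^ d * C' * Real.exp (2 * ρ), ?_⟩
  intro σ hσ hσρ c hc
  have hρσ : 0 < ρ - σ := by linarith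
  set F : (Fin d → ℕ) → (Fin d → ℕ) → ℝ :=
    fun α β => ‖b α β * c β‖ * Real.exp ((ρ - σ) * nm α) with hFdef
  have hF0 : ∀ α β, 0 ≤ F α β := fun α β =>
    mul_nonneg (norm_nonneg _) (Real.exp_nonneg _)
  set D : (Fin d → ℕ) → ℝ :=
    fun β => C' * ((nm β : ℝ) + 2) * Real.exp ((ρ - σ) * ((nm β : ℝ) + 2)) * ‖c β‖
    with hDdef
  have hD0 : ∀ β, 0 ≤ D β := by
    intro β
    apply mul_nonneg (mul_nonneg (mul_nonneg hC0 (by positivity)) (Real.exp_nonneg _))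
      (norm_nonneg _)
  have hFD : ∀ α β, F α β ≤ D β := by
    intro α β
    by_cases h : b α β = 0
    · simp only [hFdef, h, zero_mul, norm_zero]
      simpa using hD0 β
    · have hs := hsize α β h
      have hbnd : ‖b α β‖ ≤ C' * ((nm β : ℝ) + 2) := by
        calc ‖b α β‖ ≤ C * (nm α : ℕ) := hbound α β
          _ ≤ C' * (nm α : ℝ) := by
            exact mul_le_mul_of_nonneg_right hCC (Nat.cast_nonneg _)
          _ ≤ C' * ((nm β : ℝ) + 2) := by
            apply mul_le_mul_of_nonneg_left _ hC0
            have : (nm α : ℝ) ≤ (nm β : ℝ) + 2 := by exact_mod_cast hs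
            exact this
      have hexp : Real.exp ((ρ - σ) * nm α) ≤ Real.exp ((ρ - σ) * ((nm β : ℝ) + 2)) := by
        apply Real.exp_le_exp.mpr
        apply mul_le_mul_of_nonneg_left _ (le_of_lt hρσ)
        have : (nm α : ℝ) ≤ (nm β : ℝ) + 2 := by exact_mod_cast hs
        exact this
      calc F α β = ‖b α β‖ * ‖c β‖ * Real.exp ((ρ - σ) * nm α) := by
            rw [hFdef]; simp [norm_mul]
        _ ≤ (C' * ((nm β : ℝ) + 2)) * ‖c β‖ * Real.exp ((ρ - σ) * ((nm β : ℝ) + 2)) := by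
            apply mul_le_mul (mul_le_mul_of_nonneg_right hbnd (norm_nonneg _)) hexp
              (Real.exp_nonneg _)
            positivity
        _ = D β := by rw [hDdef]; ring
  -- summability in α for fixed β
  have hFsumα : ∀ β, Summable fun α => F α β := by
    intro β
    apply summable_of_ne_finset_zero (s := S β)
    intro α hα
    have : b α β = 0 := by
      by_contra h; exact hα (hmem α β h)
    simp [hFdef, this]
  -- summability in β for fixed α, and the finite-sum identity
  have hFsumβ : ∀ α, Summable fun β => ‖b α β * c β‖ := by
    intro α
    apply summable_of_ne_finset_zero (s := S α)
    intro β hβ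
    have : b α β = 0 := by
      by_contra h; exact hβ (hmem' α β h)
    simp [this]
  -- bound on the α-sum for fixed β
  have htsum_le : ∀ β, (∑' α, F α β) ≤ (5 : ℝ) ^ d * D β := by
    intro β
    rw [tsum_eq_sum (s := S β) (f := fun α => F α β)
      (by intro α hα
          have : b α β = 0 := by by_contra h; exact hα (hmem α β h)
          simp [hFdef, this])]
    calc ∑ α ∈ S β, F α β ≤ (S β).card • D β :=
          Finset.sum_le_card_nsmul _ _ _ fun α _ => hFD α β
      _ = ((S β).card : ℝ) * D β := by rw [nsmul_eq_mul]
      _ ≤ (5 : ℝ) ^ d * D β := mul_le_mul_of_nonneg_right (hcard β) (hD0 β)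
  -- bound D by the summable majorant
  have hDle : ∀ β, D β ≤ (C' * Real.exp (2 * ρ) / (Real.exp 1 * σ)) *
      (‖c β‖ * Real.exp (ρ * nm β)) := by
    intro β
    have hkey : ((nm β : ℝ) + 2) * Real.exp ((ρ - σ) * ((nm β : ℝ) + 2))
        ≤ (Real.exp (2 * ρ) / (Real.exp 1 * σ)) * Real.exp (ρ * nm β) := by
      have h1 : ((nm β : ℝ) + 2) * Real.exp (-(σ * ((nm β : ℝ) + 2)))
          ≤ 1 / (Real.exp 1 * σ) := stmt11_aux_sup hσ (by positivity)
      have h2 : Real.exp ((ρ - σ) * ((nm β : ℝ) + 2))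
          = Real.exp (-(σ * ((nm β : ℝ) + 2))) * Real.exp (ρ * ((nm β : ℝ) + 2)) := by
        rw [← Real.exp_add]; ring_nf
      rw [h2]
      have h3 : Real.exp (ρ * ((nm β : ℝ) + 2)) = Real.exp (2 * ρ) * Real.exp (ρ * nm β) := by
        rw [← Real.exp_add]; ring_nf
      calc ((nm β : ℝ) + 2) * (Real.exp (-(σ * ((nm β : ℝ) + 2))) *
              Real.exp (ρ * ((nm β : ℝ) + 2)))
          = (((nm β : ℝ) + 2) * Real.exp (-(σ * ((nm β : ℝ) + 2)))) *
              Real.exp (ρ * ((nm β : ℝ) + 2)) := by ring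
        _ ≤ (1 / (Real.exp 1 * σ)) * Real.exp (ρ * ((nm β : ℝ) + 2)) :=
            mul_le_mul_of_nonneg_right h1 (Real.exp_nonneg _)
        _ = (Real.exp (2 * ρ) / (Real.exp 1 * σ)) * Real.exp (ρ * nm β) := by
            rw [h3]; ring
    calc D β = (((nm β : ℝ) + 2) * Real.exp ((ρ - σ) * ((nm β : ℝ) + 2))) * (C' * ‖c β‖) := by
          rw [hDdef]; ring
      _ ≤ ((Real.exp (2 * ρ) / (Real.exp 1 * σ)) * Real.exp (ρ * nm β)) * (C' * ‖c β‖) :=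
          mul_le_mul_of_nonneg_right hkey (mul_nonneg hC0 (norm_nonneg _))
      _ = (C' * Real.exp (2 * ρ) / (Real.exp 1 * σ)) * (‖c β‖ * Real.exp (ρ * nm β)) := by
          ring
  -- the majorant for the α-sums
  set Mc : ℝ := (5 : ℝ) ^ d * C' * Real.exp (2 * ρ) with hMcdef
  have hmajor : ∀ β, (∑' α, F α β) ≤ (Mc / (Real.exp 1 * σ)) *
      (‖c β‖ * Real.exp (ρ * nm β)) := by
    intro β
    calc (∑' α, F α β) ≤ (5 : ℝ) ^ d * D β := htsum_le β
      _ ≤ (5 : ℝ) ^ d * ((C' * Real.exp (2 * ρ) / (Real.exp 1 * σ)) *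
            (‖c β‖ * Real.exp (ρ * nm β))) :=
          mul_le_mul_of_nonneg_left (hDle β) (by positivity)
      _ = (Mc / (Real.exp 1 * σ)) * (‖c β‖ * Real.exp (ρ * nm β)) := by
          rw [hMcdef]; ring
  have hgsum : Summable fun β => (Mc / (Real.exp 1 * σ)) *
      (‖c β‖ * Real.exp (ρ * nm β)) := hc.mul_left _
  have hTsum : Summable fun β => ∑' α, F α β :=
    Summable.of_nonneg_of_le (fun β => tsum_nonneg fun α => hF0 α β) hmajor hgsum
  -- summability of the uncurried function (β, α) order
  have hGsum : Summable fun p : (Fin d → ℕ) × (Fin d → ℕ) => F p.2 p.1 :=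
    (summable_prod_of_nonneg fun p => hF0 p.2 p.1).mpr ⟨fun β => hFsumα β, hTsum⟩
  -- in (α, β) order
  have hGsum' : Summable (Function.uncurry F) := by
    have := (Equiv.prodComm (Fin d → ℕ) (Fin d → ℕ)).summable_iff
      (f := fun p : (Fin d → ℕ) × (Fin d → ℕ) => F p.2 p.1)
    exact this.mpr hGsum
  have hsplit := (summable_prod_of_nonneg
    (f := fun p : (Fin d → ℕ) × (Fin d → ℕ) => F p.1 p.2)
    (fun p => hF0 p.1 p.2)).mp hGsum'
  have hFsumβ' : ∀ α, Summable fun β => F α β := hsplit.1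
  have hrow : Summable fun α => ∑' β, F α β := hsplit.2
  -- pointwise bound on the goal function
  have hptwise : ∀ α, ‖∑' β, b α β * c β‖ * Real.exp ((ρ - σ) * nm α) ≤ ∑' β, F α β := by
    intro α
    have h1 : ‖∑' β, b α β * c β‖ ≤ ∑' β, ‖b α β * c β‖ :=
      norm_tsum_le_tsum_norm (hFsumβ α)
    calc ‖∑' β, b α β * c β‖ * Real.exp ((ρ - σ) * nm α)
        ≤ (∑' β, ‖b α β * c β‖) * Real.exp ((ρ - σ) * nm α) :=
          mul_le_mul_of_nonneg_right h1 (Real.exp_nonneg _)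
      _ = ∑' β, F α β := by rw [← tsum_mul_right]
  have hgoal0 : ∀ α, 0 ≤ ‖∑' β, b α β * c β‖ * Real.exp ((ρ - σ) * nm α) :=
    fun α => mul_nonneg (norm_nonneg _) (Real.exp_nonneg _)
  have hsum1 : Summable (fun α : Fin d → ℕ =>
      ‖∑' β : Fin d → ℕ, b α β * c β‖ * Real.exp ((ρ - σ) * (nm α : ℕ))) :=
    Summable.of_nonneg_of_le hgoal0 hptwise hrow
  refine ⟨hsum1, ?_⟩
  have hswap : (∑' α, ∑' β, F α β) = ∑' β, ∑' α, F α β :=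
    (Summable.tsum_comm' hGsum' hFsumβ' hFsumα).symm
  calc (∑' α, ‖∑' β, b α β * c β‖ * Real.exp ((ρ - σ) * (nm α : ℕ)))
      ≤ ∑' α, ∑' β, F α β := Summable.tsum_le_tsum hptwise hsum1 hrow
    _ = ∑' β, ∑' α, F α β := hswap
    _ ≤ ∑' β, (Mc / (Real.exp 1 * σ)) * (‖c β‖ * Real.exp (ρ * nm β)) :=
        Summable.tsum_le_tsum hmajor hTsum hgsum
    _ = (Mc / (Real.exp 1 * σ)) * ∑' β, ‖c β‖ * Real.exp (ρ * nm β) := tsum_mul_left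
end
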